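/- arXiv:2311.09486 — 3 statements merged into one kernel-verified Lean document; each statement's English description precedes it below -/
import Mathlib

section
/- Let k ∈ ℕ and p ∈ (0,1) with kp < 1. For the subcritical branching process with offspring distribution Binomial(k,p) started from one individual, the total progeny T_s satisfies P(T_s = j) = (1/j) C(kj, j-1) p^{j-1} (1-p)^{(k-1)j+1} for all j ∈ ℕ. -/
open scoped ENNReal

/-- Binomial thinning of a nonnegative-integer-valued distribution `ξ` with retention
probability `p`: given `ξ = n`, the result is `Binomial(n, p)`. -/
noncomputable def binThin (p : ℝ≥0∞) (hp : p ≤ 1) (ξ : PMF ℕ) : PMF ℕ :=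
  ξ.bind fun n => (PMF.binomial p.toNNReal (by simpa using ENNReal.toNNReal_mono ENNReal.one_ne_top hp) n).map Fin.val

/-- Mean of a `PMF` on `ℕ`. -/
noncomputable def pmfMean (μ : PMF ℕ) : ℝ≥0∞ := ∑' k : ℕ, (k : ℝ≥0∞) * μ k

/-- Tail probability `P(μ ≥ k)`. -/
noncomputable def pmfTail (μ : PMF ℕ) (k : ℕ) : ℝ≥0∞ := ∑' n : ℕ, if k ≤ n then μ n else 0

/-- Probability generating function of a `PMF` on `ℕ`. -/
noncomputable def pmfPgf (μ : PMF ℕ) (s : ℝ) : ℝ := ∑' k : ℕ, (μ k).toReal * s ^ k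

/-- Distribution of the sum of `n` i.i.d. copies of `μ`. -/
noncomputable def iidSum (μ : PMF ℕ) : ℕ → PMF ℕ
  | 0 => PMF.pure 0
  | n + 1 => (iidSum μ n).bind fun t => μ.map (t + ·)

/-- Distribution of the `n`-th generation of a Galton–Watson branching process with
offspring distribution `μ`, started from a single individual. -/
noncomputable def gwGen (μ : PMF ℕ) : ℕ → PMF ℕ
  | 0 => PMF.pure 1
  | n + 1 => (gwGen μ n).bind (iidSum μ)

/-- Extinction probability `P(⋃ₙ {Zₙ = 0})` of the Galton-Watson process:
the events `{Zₙ = 0}` are increasing, so this is `⨆ n, P(Zₙ = 0)`. -/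
noncomputable def extinctionProb (μ : PMF ℕ) : ℝ≥0∞ := ⨆ n, gwGen μ n 0

/-- Survival (non-extinction) probability of the Galton-Watson process. -/
noncomputable def survivalProb (μ : PMF ℕ) : ℝ≥0∞ := 1 - extinctionProb μ

/-- Expected total progeny `E(Σₙ Zₙ)` of the Galton-Watson process (by Tonelli this is
the sum of the means of the generation sizes). -/
noncomputable def progenyMean (μ : PMF ℕ) : ℝ≥0∞ := ∑' n : ℕ, pmfMean (gwGen μ n)

/-- The Riemann zeta function `ζ(γ) = Σ_{j ≥ 1} j^{-γ}` as a real series. -/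
noncomputable def zetaSum (γ : ℝ) : ℝ := ∑' n : ℕ, ((n : ℝ) + 1) ^ (-γ)

/-- The polylogarithm `Li_a(x) = Σ_{j ≥ 1} x^j / j^a`. -/
noncomputable def polylog (a x : ℝ) : ℝ := ∑' n : ℕ, x ^ (n + 1) / ((n : ℝ) + 1) ^ a

/-!
Let `T = ∑ P(T_s = n) Xⁿ`. The distributional equation `T_s = 1 + ∑_{i ≤ ξ} T_s⁽ⁱ⁾`,
`ξ ~ Bin(k, p)`, says `T = X (p T + 1 - p)ᵏ`, and this equation determines `T` coefficient by
coefficient. It is solved explicitly through the Fuss–Catalan series `B = 1 + X Bᵏ`: with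
`c = p (1 - p)ᵏ⁻¹` one checks `T = (1 - p)ᵏ X Bᵏ(c X)`. The coefficients of `Bʳ` are the Raney
numbers `r/(kn + r) · C(kn + r, n)`, and for `r = k` this is `C(k(n + 1), n)/(n + 1)`.
-/

open PowerSeries

/-- The Raney numbers `r/(kn + r) · C(kn + r, n)` (see `mul_raney_eq`), defined by the recurrence
that makes `raney k r n` the coefficient of `Xⁿ` in `Bʳ`, where `B = 1 + X Bᵏ`. -/
def raney (k : ℕ) : ℕ → ℕ → ℕ
  | _, 0 => 1
  | 0, _ + 1 => 0
  | r + 1, n + 1 => raney k r (n + 1) + raney k (r + k) n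
termination_by r n => (n, r)

theorem mul_raney_eq {k : ℕ} (hk : 0 < k) (r n : ℕ) :
    (k * n + r) * raney k r n = r * (k * n + r).choose n := by
  induction r, n using raney.induct k with
  | case1 r => simp [raney]
  | case2 n => simp [raney]
  | case3 r n ih₁ ih₂ =>
    set m := k * (n + 1) + r with hm
    have hnm : n + 1 ≤ m := (Nat.le_mul_of_pos_left _ hk).trans (Nat.le_add_right _ _)
    have h₃ := Nat.add_one_mul_choose_eq m n
    have h₄ := Nat.choose_succ_right_eq m n
    rw [show k * n + (r + k) = m by rw [hm]; ring] at ih₂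
    rw [raney, show k * (n + 1) + (r + 1) = m + 1 by omega]
    apply Nat.eq_of_mul_eq_mul_left (show 0 < m * (n + 1) by positivity)
    zify [(Nat.le_succ n).trans hnm] at *
    linear_combination (m + 1) * (n + 1) * ih₁ + (m + 1) * (n + 1) * ih₂ + (m + 1) * r * h₄
      + m * (r + 1) * h₃ - (m + 1) * m.choose n * hm

namespace PowerSeries

variable {R : Type*}

theorem eq_of_succ_eq_add_X_mul [Semiring R] {k : ℕ} {F G : ℕ → R⟦X⟧}
    (hF : ∀ r, F (r + 1) = F r + X * F (r + k)) (hG : ∀ r, G (r + 1) = G r + X * G (r + k))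
    (h₀ : F 0 = G 0) : F = G := by
  suffices h : ∀ n r, coeff n (F r) = coeff n (G r) from funext fun r => ext fun n => h n r
  intro n
  induction n with
  | zero =>
    intro r
    induction r with
    | zero => rw [h₀]
    | succ r ih => rw [hF, hG, map_add, map_add, coeff_zero_X_mul, coeff_zero_X_mul, ih]
  | succ n ihn =>
    intro r
    induction r with
    | zero => rw [h₀]
    | succ r ih => rw [hF, hG, map_add, map_add, coeff_succ_X_mul, coeff_succ_X_mul, ih, ihn]

/-- The coefficient of `Xⁿ⁺¹` in a solution only depends on its coefficients up to `Xⁿ`. -/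
theorem eq_of_eq_X_mul_pow [CommSemiring R] {a b : R} {k : ℕ} {T S : R⟦X⟧}
    (hT : T = X * (C b * T + C a) ^ k) (hS : S = X * (C b * S + C a) ^ k) : T = S := by
  have htrunc : ∀ n, trunc n T = trunc n S := by
    intro n
    induction n with
    | zero => rfl
    | succ n ih =>
      rw [trunc_succ, trunc_succ, ih]
      congr 2
      cases n with
      | zero => rw [hT, hS]; simp
      | succ n =>
        have h : trunc (n + 1) ((C b * T + C a) ^ k) = trunc (n + 1) ((C b * S + C a) ^ k) := by
          rw [← trunc_trunc_pow, map_add, trunc_C_mul, ih, ← trunc_C_mul, ← map_add,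
            trunc_trunc_pow]
        rw [hT, hS, coeff_succ_X_mul, coeff_succ_X_mul]
        simpa [coeff_trunc] using congrArg (Polynomial.coeff · n) h
  ext n
  simpa [coeff_trunc] using congrArg (Polynomial.coeff · n) (htrunc (n + 1))

-- `PowerSeries.rescale_X` is only stated over commutative rings.
theorem rescale_X_eq_C_mul_X [CommSemiring R] (a : R) : rescale a X = C a * X := by
  ext (_ | _ | n) <;> simp [coeff_X]

end PowerSeries

section RaneySeries

variable (R : Type*) [CommSemiring R] (k : ℕ)

noncomputable def raneySeries (r : ℕ) : R⟦X⟧ := mk fun n => (raney k r n : R)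

theorem raneySeries_zero : raneySeries R k 0 = 1 := by
  ext (_ | n) <;> simp [raneySeries, raney]

theorem raneySeries_succ (r : ℕ) :
    raneySeries R k (r + 1) = raneySeries R k r + X * raneySeries R k (r + k) := by
  ext (_ | n) <;> simp [raneySeries, raney]

theorem raneySeries_mul (r s : ℕ) :
    raneySeries R k r * raneySeries R k s = raneySeries R k (r + s) := by
  refine congrFun (eq_of_succ_eq_add_X_mul (k := k)
    (F := fun s => raneySeries R k r * raneySeries R k s) (G := fun s => raneySeries R k (r + s))
    (fun s => ?_) (fun s => ?_) ?_) s
  · rw [raneySeries_succ, mul_add, mul_left_comm]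
  · rw [← add_assoc, raneySeries_succ, add_assoc]
  · rw [raneySeries_zero, mul_one, add_zero]

theorem raneySeries_eq_pow (r : ℕ) : raneySeries R k r = raneySeries R k 1 ^ r := by
  induction r with
  | zero => rw [raneySeries_zero, pow_zero]
  | succ r ih => rw [← raneySeries_mul, ih, pow_succ]

theorem raneySeries_one : raneySeries R k 1 = X * raneySeries R k 1 ^ k + 1 := by
  have h := raneySeries_succ R k 0
  rwa [raneySeries_zero, zero_add, zero_add, raneySeries_eq_pow R k k, add_comm] at h

end RaneySeries

namespace PMF

theorem map_add_left_apply (μ : PMF ℕ) (t n : ℕ) :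
    μ.map (t + ·) n = if t ≤ n then μ (n - t) else 0 := by
  rw [map_apply]
  split_ifs with h
  · rw [tsum_eq_single (n - t) fun s hs => ?_, if_pos (by omega)]
    rw [if_neg (by omega)]
  · exact ENNReal.tsum_eq_zero.mpr fun s => if_neg (by omega)

theorem mk_bind_map_add_left (ν μ : PMF ℕ) :
    mk (ν.bind fun t => μ.map (t + ·)) = mk ν * mk μ := by
  ext n
  rw [coeff_mk, bind_apply, coeff_mul, Finset.Nat.sum_antidiagonal_eq_sum_range_succ_mk,
    tsum_eq_sum (s := Finset.range (n + 1))]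
  · refine Finset.sum_congr rfl fun t ht => ?_
    rw [map_add_left_apply, if_pos (by simpa [Nat.lt_succ_iff] using ht)]
    simp
  · intro t ht
    rw [map_add_left_apply, if_neg (by simpa [Nat.lt_succ_iff] using ht), mul_zero]

theorem mk_map_add_one (ν : PMF ℕ) : mk (ν.map (· + 1)) = X * mk ν := by
  ext (_ | n) <;> simp [map_apply]

end PMF

theorem mk_iidSum (μ : PMF ℕ) (m : ℕ) : mk (iidSum μ m) = mk μ ^ m := by
  induction m with
  | zero => ext n; simp [iidSum, PMF.pure_apply, coeff_one]
  | succ m ih => rw [iidSum, PMF.mk_bind_map_add_left, ih, pow_succ]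

theorem mk_binomial_bind_iidSum (q : NNReal) (hq : q ≤ 1) (k : ℕ) (ν : PMF ℕ) :
    mk (((PMF.binomial q hq k).map Fin.val).bind (iidSum ν))
      = (C (q : ℝ≥0∞) * mk ν + C (1 - (q : ℝ≥0∞))) ^ k := by
  ext n
  rw [PMF.bind_map, coeff_mk, PMF.bind_apply, tsum_fintype, add_pow, map_sum,
    ← Fin.sum_univ_eq_sum_range]
  refine Finset.sum_congr rfl fun i _ => ?_
  rw [Function.comp_apply, PMF.binomial_apply, mul_pow, ← map_pow, ← map_pow, ← mk_iidSum,
    ← map_natCast (C (R := ℝ≥0∞)), mul_right_comm _ (mk _), mul_right_comm _ (mk _), ← map_mul,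
    ← map_mul, coeff_C_mul, coeff_mk, Fin.val_last]

theorem progeny_mk_eq {q : NNReal} (hq : q ≤ 1) {k : ℕ} (hk : 0 < k) {τ : PMF ℕ}
    (hτ : τ = (((PMF.binomial q hq k).map Fin.val).bind (iidSum τ)).map (· + 1)) :
    mk τ = X * (C ((1 - (q : ℝ≥0∞)) ^ k) *
      rescale ((q : ℝ≥0∞) * (1 - q) ^ (k - 1)) (raneySeries ℝ≥0∞ k k)) := by
  refine eq_of_eq_X_mul_pow (a := 1 - (q : ℝ≥0∞)) (b := q) (k := k) ?_ ?_
  · conv_lhs => rw [hτ]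
    rw [PMF.mk_map_add_one, mk_binomial_bind_iidSum]
  · obtain ⟨k, rfl⟩ : ∃ k', k = k' + 1 := ⟨k - 1, by omega⟩
    set c : ℝ≥0∞ := q * (1 - q) ^ (k + 1 - 1)
    set B := raneySeries ℝ≥0∞ (k + 1) 1 with hB
    have key : C (q : ℝ≥0∞) * (X * (C ((1 - (q : ℝ≥0∞)) ^ (k + 1)) * rescale c (B ^ (k + 1))))
        + C (1 - (q : ℝ≥0∞)) = C (1 - (q : ℝ≥0∞)) * rescale c B := by
      conv_rhs => rw [hB, raneySeries_one, ← hB]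
      rw [map_add, map_mul, rescale_X_eq_C_mul_X, map_one, map_pow]
      simp only [c, map_mul, map_pow, Nat.add_sub_cancel]
      ring
    rw [raneySeries_eq_pow, ← hB, key, mul_pow, ← map_pow, ← map_pow]

/-- for the subcritical branching process with offspring `Binomial(k,p)`
(`kp < 1`), the total progeny `T_s` (characterized by `T_s = 1 + Σ_{i≤offspring} T_s^{(i)}`)
satisfies `P(T_s = j) = (1/j) C(kj, j-1) p^{j-1} (1-p)^{(k-1)j+1}` for all `j ≥ 1`. -/
theorem mpe_progeny_dist_binomial (k : ℕ) (hk : 1 ≤ k)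
    (p : ℝ) (hp0 : 0 < p) (hple : ENNReal.ofReal p ≤ 1)
    (τ : PMF ℕ)
    (hτ : τ = (((PMF.binomial (ENNReal.ofReal p).toNNReal
          (by simpa using ENNReal.toNNReal_mono ENNReal.one_ne_top hple) k).map Fin.val).bind
        (iidSum τ)).map (· + 1)) :
    ∀ j : ℕ, 1 ≤ j →
      (τ j).toReal = (1 / (j : ℝ)) * (Nat.choose (k * j) (j - 1) : ℝ) * p ^ (j - 1)
        * (1 - p) ^ ((k - 1) * j + 1) := by
  intro j hj
  obtain ⟨n, rfl⟩ := Nat.exists_eq_add_of_le' hj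
  have hτn := congrArg (coeff (n + 1)) (progeny_mk_eq _ hk hτ)
  rw [coeff_mk, coeff_succ_X_mul, coeff_C_mul, coeff_rescale, raneySeries, coeff_mk,
    ENNReal.coe_toNNReal ENNReal.ofReal_ne_top] at hτn
  have h1p : 1 - ENNReal.ofReal p = ENNReal.ofReal (1 - p) := by
    rw [← ENNReal.ofReal_one, ENNReal.ofReal_sub _ hp0.le]
  rw [hτn, h1p]
  simp only [ENNReal.toReal_mul, ENNReal.toReal_pow, ENNReal.toReal_ofReal hp0.le,
    ENNReal.toReal_ofReal (sub_nonneg.2 (ENNReal.ofReal_le_one.mp hple)), ENNReal.toReal_natCast]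
  have hchoose : ((k * (n + 1)).choose n : ℝ) = (n + 1) * raney k k n := by
    have h := mul_raney_eq hk k n
    rw [← mul_add_one, mul_assoc] at h
    exact_mod_cast (Nat.eq_of_mul_eq_mul_left hk h).symm
  obtain ⟨k, rfl⟩ : ∃ k', k = k' + 1 := ⟨k - 1, by omega⟩
  rw [Nat.add_sub_cancel, Nat.add_sub_cancel, Nat.cast_add_one, hchoose]
  field_simp
  ring
end

section
/- Let ξ be a nonnegative integer-valued random variable with finite mean and pgf G_ξ, p ∈ (0,1), Y geometric with P(Y = i) = (1-p)p^i independent of ξ, and X = min(Y,ξ). Then the probability generating function of X is g₂(s) = (1-p)·Σ_{k≥0} (sp)^k P(ξ ≥ k) + p·G_ξ(sp), for s ∈ [0,1]. -/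
open scoped ENNReal

/-!
Given `ξ = n`, the variable `min(Y, n)` has pgf `(1-p) ∑_{k<n} (sp)^k + (sp)^n`, because the
geometric tail is `P(Y ≥ n) = pⁿ`. Averaging over `ξ` and exchanging the order of summation
turns `∑_n P(ξ = n) ∑_{k ≤ n} (sp)^k` into `∑_k (sp)^k P(ξ ≥ k)`. Everything is computed in
`ℝ≥0∞`, where Tonelli is free; since `sp < 1` both series are finite, so the identity passes to `ℝ`.
-/

noncomputable def ennPgf (μ : PMF ℕ) (r : ℝ≥0∞) : ℝ≥0∞ := ∑' k : ℕ, r ^ k * μ k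

lemma ennPgf_map (μ : PMF ℕ) (g : ℕ → ℕ) (r : ℝ≥0∞) :
    ennPgf (μ.map g) r = ∑' y, r ^ g y * μ y := by
  simp only [ennPgf, PMF.map_apply, ← ENNReal.tsum_mul_left, mul_ite, mul_zero]
  rw [ENNReal.tsum_comm]
  congr 1 with y
  rw [tsum_eq_single (g y) fun k hk => if_neg hk, if_pos rfl]

lemma ennPgf_bind (μ : PMF ℕ) (f : ℕ → PMF ℕ) (r : ℝ≥0∞) :
    ennPgf (μ.bind f) r = ∑' n, μ n * ennPgf (f n) r := by
  simp only [ennPgf, PMF.bind_apply, ← ENNReal.tsum_mul_left, mul_left_comm (r ^ _)]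
  exact ENNReal.tsum_comm

lemma ennPgf_le_one (μ : PMF ℕ) {r : ℝ≥0∞} (hr : r ≤ 1) : ennPgf μ r ≤ 1 :=
  calc ennPgf μ r ≤ ∑' k, μ k := ENNReal.tsum_le_tsum fun _ =>
        mul_le_of_le_one_left' (pow_le_one₀ zero_le hr)
    _ = 1 := μ.tsum_coe

lemma toReal_ennPgf (μ : PMF ℕ) {t : ℝ} (ht : 0 ≤ t) :
    (ennPgf μ (ENNReal.ofReal t)).toReal = pmfPgf μ t := by
  rw [ennPgf, ENNReal.tsum_toReal_eq fun k => ENNReal.mul_ne_top (by simp) (μ.apply_ne_top k)]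
  congr 1 with k
  rw [ENNReal.toReal_mul, ← ENNReal.ofReal_pow ht, ENNReal.toReal_ofReal (pow_nonneg ht k),
    mul_comm]

lemma pmfTail_le_one (μ : PMF ℕ) (k : ℕ) : pmfTail μ k ≤ 1 :=
  calc pmfTail μ k ≤ ∑' n, μ n := ENNReal.tsum_le_tsum fun n => by split_ifs <;> simp
    _ = 1 := μ.tsum_coe

lemma tsum_mul_pmfTail (μ : PMF ℕ) (f : ℕ → ℝ≥0∞) :
    ∑' k, f k * pmfTail μ k = ∑' n, μ n * ∑ k ∈ Finset.range (n + 1), f k := by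
  simp only [pmfTail, ← ENNReal.tsum_mul_left, mul_ite, mul_zero]
  rw [ENNReal.tsum_comm]
  congr 1 with n
  rw [tsum_eq_sum (s := Finset.range (n + 1))
    fun k hk => if_neg (by simpa [Nat.lt_succ_iff] using hk), Finset.mul_sum]
  refine Finset.sum_congr rfl fun k hk => ?_
  rw [if_pos (Nat.lt_succ_iff.1 (Finset.mem_range.1 hk)), mul_comm]

lemma tsum_pow_mul_pmfTail_ne_top (μ : PMF ℕ) {q : ℝ≥0∞} (hq : q < 1) :
    ∑' k, q ^ k * pmfTail μ k ≠ ⊤ := by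
  refine ne_top_of_le_ne_top (by simpa [tsub_eq_zero_iff_le] using hq : ∑' k, q ^ k ≠ ⊤) ?_
  exact ENNReal.tsum_le_tsum fun k => mul_le_of_le_one_right' (pmfTail_le_one μ k)

lemma tsum_pow_min_mul_geometric {a b : ℝ≥0∞} (Y : PMF ℕ) (hY : ∀ y, Y y = a * b ^ y)
    (r : ℝ≥0∞) (n : ℕ) :
    ∑' y, r ^ min y n * Y y = a * ∑ k ∈ Finset.range n, (r * b) ^ k + (r * b) ^ n := by
  rw [← ENNReal.summable.sum_add_tsum_nat_add' (k := n), Finset.mul_sum]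
  congr 1
  · refine Finset.sum_congr rfl fun y hy => ?_
    rw [min_eq_left (Finset.mem_range.1 hy).le, hY, mul_pow]
    ring
  · have hshift : ∀ j, Y (j + n) = b ^ n * Y j := fun j => by rw [hY, hY, pow_add]; ring
    simp only [min_eq_right (Nat.le_add_left n _), hshift, ENNReal.tsum_mul_left, Y.tsum_coe,
      mul_one, mul_pow]

lemma ennPgf_bind_map_min_geometric {a b : ℝ≥0∞} (hab : a + b = 1) (ξ Y : PMF ℕ)
    (hY : ∀ y, Y y = a * b ^ y) (r : ℝ≥0∞) :
    ennPgf (ξ.bind fun n => Y.map fun y => min y n) r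
      = a * ∑' k, (r * b) ^ k * pmfTail ξ k + b * ennPgf ξ (r * b) := by
  rw [ennPgf_bind, tsum_mul_pmfTail, ennPgf, ← ENNReal.tsum_mul_left, ← ENNReal.tsum_mul_left,
    ← ENNReal.tsum_add]
  congr 1 with n
  rw [ennPgf_map, tsum_pow_min_mul_geometric Y hY]
  calc ξ n * (a * ∑ k ∈ Finset.range n, (r * b) ^ k + (r * b) ^ n)
      = ξ n * (a * ∑ k ∈ Finset.range n, (r * b) ^ k + (a + b) * (r * b) ^ n) := by
        rw [hab, one_mul]
    _ = _ := by rw [Finset.sum_range_succ]; ring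

theorem truncGeom_pgf_general (p : ℝ) (hp0 : 0 < p) (hp1 : p < 1)
    (ξ Y : PMF ℕ) (hY : ∀ i : ℕ, Y i = ENNReal.ofReal ((1 - p) * p ^ i))
    (s : ℝ) (hs : s ∈ Set.Icc (0 : ℝ) 1) :
    pmfPgf (ξ.bind fun n => Y.map fun y => min y n) s
      = (1 - p) * ∑' k : ℕ, (s * p) ^ k * (pmfTail ξ k).toReal + p * pmfPgf ξ (s * p) := by
  obtain ⟨hs0, hs1⟩ := hs
  have hsp : 0 ≤ s * p := mul_nonneg hs0 hp0.le
  have hq : ENNReal.ofReal s * ENNReal.ofReal p = ENNReal.ofReal (s * p) :=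
    (ENNReal.ofReal_mul hs0).symm
  have hq1 : ENNReal.ofReal (s * p) < 1 := ENNReal.ofReal_lt_one.2 (by nlinarith)
  have hab : ENNReal.ofReal (1 - p) + ENNReal.ofReal p = 1 := by
    rw [← ENNReal.ofReal_add (by linarith) hp0.le]; simp
  have hYgeom : ∀ y, Y y = ENNReal.ofReal (1 - p) * ENNReal.ofReal p ^ y := fun y => by
    rw [hY, ENNReal.ofReal_mul (by linarith), ENNReal.ofReal_pow hp0.le]
  have htail : ∑' k, (s * p) ^ k * (pmfTail ξ k).toReal
      = (∑' k, ENNReal.ofReal (s * p) ^ k * pmfTail ξ k).toReal := by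
    rw [ENNReal.tsum_toReal_eq fun k => ENNReal.mul_ne_top (by simp)
      (ne_top_of_le_ne_top ENNReal.one_ne_top (pmfTail_le_one ξ k))]
    simp [ENNReal.toReal_ofReal hsp]
  rw [← toReal_ennPgf _ hs0, ennPgf_bind_map_min_geometric hab ξ Y hYgeom, hq,
    ENNReal.toReal_add
      (ENNReal.mul_ne_top ENNReal.ofReal_ne_top (tsum_pow_mul_pmfTail_ne_top ξ hq1))
      (ENNReal.mul_ne_top ENNReal.ofReal_ne_top
        (ne_top_of_le_ne_top ENNReal.one_ne_top (ennPgf_le_one ξ hq1.le))),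
    ENNReal.toReal_mul, ENNReal.toReal_mul, ENNReal.toReal_ofReal (by linarith),
    ENNReal.toReal_ofReal hp0.le, htail, toReal_ennPgf ξ hsp]

/-- with `Y` geometric (`P(Y=i)=(1-p)pⁱ`), independent of `ξ`, and
`X = min(Y,ξ)`, the pgf of `X` is `g₂(s) = (1-p)·Σ_{k≥0}(sp)^k P(ξ ≥ k) + p·G_ξ(sp)`. -/
theorem truncGeom_pgf (p : ℝ) (hp0 : 0 < p) (hp1 : p < 1)
    (ξ Y : PMF ℕ) (hY : ∀ i : ℕ, Y i = ENNReal.ofReal ((1 - p) * p ^ i))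
    (hmean : pmfMean ξ ≠ ⊤)
    (s : ℝ) (hs : s ∈ Set.Icc (0 : ℝ) 1) :
    pmfPgf (ξ.bind fun n => Y.map fun y => min y n) s
      = (1 - p) * ∑' k : ℕ, (s * p) ^ k * (pmfTail ξ k).toReal + p * pmfPgf ξ (s * p) :=
  truncGeom_pgf_general p hp0 hp1 ξ Y hY s hs
end

section
/- Let k ∈ ℕ, p ∈ (0,1), and consider the branching process with offspring distribution X = min(Y, k), where Y is geometric with P(Y=i)=(1-p)p^i (the (p,ξ)-MAE model with ξ ≡ k). The process survives with positive probability if and only if k > log(2p-1)/log(p) - 1; equivalently, if and only if p^{k+1} - 2p + 1 < 0. -/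
open scoped ENNReal

/-!
The generation sizes have generating functions `f^[n]`, where `f` is the offspring pgf, so the
extinction probability `q = ⨆ₙ f^[n] 0` is the least fixed point of `f` in `[0, 1]` (in `ℝ≥0∞`,
where `f` is monotone and commutes with suprema of chains with no summability conditions).
For `X = min(Y, k)` one has `1 - f x = (1 - x) T x`, where `T x = ∑_{j<k} p^{j+1} x^j` generates the
tails `P(X > j)`, so the fixed points of `f` in `[0, 1)` are the solutions of `T x = 1` there.
Moreover `T 0 ≤ p < 1` and `(1 - p) (1 - T 1) = p^{k+1} - 2p + 1`, where `T 1 = E X`. If this is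
negative, the intermediate value theorem gives a fixed point below `1`; otherwise
`T x ≤ (1 - x) p + x T 1 < 1` on `[0, 1)`, so `q = 1`.
-/

namespace PMF

noncomputable def pgf (μ : PMF ℕ) (s : ℝ≥0∞) : ℝ≥0∞ := ∑' n, μ n * s ^ n

variable (μ : PMF ℕ)

theorem pgf_pure (a : ℕ) (s : ℝ≥0∞) : (pure a : PMF ℕ).pgf s = s ^ a := by
  rw [pgf, tsum_eq_single a fun n hn => by simp [pure_apply_of_ne _ _ hn], pure_apply_self,
    one_mul]

theorem pgf_bind (κ : ℕ → PMF ℕ) (s : ℝ≥0∞) :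
    (μ.bind κ).pgf s = ∑' t, μ t * (κ t).pgf s := by
  simp only [pgf, bind_apply, ← ENNReal.tsum_mul_right, ← ENNReal.tsum_mul_left, mul_assoc]
  exact ENNReal.tsum_comm

theorem pgf_map (f : ℕ → ℕ) (s : ℝ≥0∞) : (μ.map f).pgf s = ∑' n, μ n * s ^ f n := by
  simp only [← bind_pure_comp, pgf_bind, Function.comp_apply, pgf_pure]

theorem pgf_map_add_left (t : ℕ) (s : ℝ≥0∞) : (μ.map (t + ·)).pgf s = s ^ t * μ.pgf s := by
  rw [pgf_map, pgf, ← ENNReal.tsum_mul_left]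
  simp only [pow_add, mul_left_comm]

theorem pgf_zero : μ.pgf 0 = μ 0 := by
  rw [pgf, tsum_eq_single 0 fun n hn => by simp [zero_pow hn], pow_zero, mul_one]

theorem pgf_mono : Monotone μ.pgf := fun _ _ h =>
  ENNReal.tsum_le_tsum fun n => by gcongr

theorem pgf_iSup {s : ℕ → ℝ≥0∞} (hs : Monotone s) : μ.pgf (⨆ i, s i) = ⨆ i, μ.pgf (s i) := by
  simp only [pgf, ENNReal.iSup_pow, ENNReal.mul_iSup, ENNReal.tsum_eq_iSup_sum]
  rw [iSup_comm]
  congr 1 with t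
  exact ENNReal.finsetSum_iSup_of_monotone fun n i j h => by gcongr; exact hs h

end PMF

theorem pgf_iidSum (μ : PMF ℕ) (t : ℕ) (s : ℝ≥0∞) : (iidSum μ t).pgf s = μ.pgf s ^ t := by
  induction t with
  | zero => rw [iidSum, PMF.pgf_pure, pow_zero, pow_zero]
  | succ t ih =>
    simp only [iidSum, PMF.pgf_bind, PMF.pgf_map_add_left, ← mul_assoc]
    rw [ENNReal.tsum_mul_right, ← PMF.pgf, ih, pow_succ]

theorem pgf_gwGen (μ : PMF ℕ) (n : ℕ) (s : ℝ≥0∞) : (gwGen μ n).pgf s = μ.pgf^[n] s := by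
  induction n generalizing s with
  | zero => exact (PMF.pgf_pure 1 s).trans (pow_one s)
  | succ n ih =>
    simp only [gwGen, PMF.pgf_bind, pgf_iidSum]
    rw [← PMF.pgf, ih, Function.iterate_succ_apply]

theorem gwGen_apply_zero (μ : PMF ℕ) (n : ℕ) : gwGen μ n 0 = μ.pgf^[n] 0 := by
  rw [← PMF.pgf_zero, pgf_gwGen]

theorem extinctionProb_le_of_pgf_le {μ : PMF ℕ} {x : ℝ≥0∞} (hx : μ.pgf x ≤ x) :
    extinctionProb μ ≤ x := by
  refine iSup_le fun n => ?_
  rw [gwGen_apply_zero]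
  induction n with
  | zero => exact zero_le
  | succ n ih => exact (Function.iterate_succ_apply' _ _ _).trans_le ((μ.pgf_mono ih).trans hx)

theorem pgf_extinctionProb (μ : PMF ℕ) : μ.pgf (extinctionProb μ) = extinctionProb μ := by
  have hmono : Monotone fun n => μ.pgf^[n] 0 :=
    monotone_nat_of_le_succ fun n => μ.pgf_mono.iterate n zero_le
  simp only [extinctionProb, gwGen_apply_zero, μ.pgf_iSup hmono, ← Function.iterate_succ_apply']
  exact le_antisymm (iSup_le fun n => le_iSup (fun m => μ.pgf^[m] 0) (n + 1))
    (iSup_le fun n => (μ.pgf_mono.iterate n zero_le).trans (le_iSup (fun m => μ.pgf^[m + 1] 0) n))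

theorem exists_pgf_eq_self_of_extinctionProb_lt_one {μ : PMF ℕ} (h : extinctionProb μ < 1) :
    ∃ x ∈ Set.Ico (0 : ℝ) 1, μ.pgf (ENNReal.ofReal x) = ENNReal.ofReal x := by
  refine ⟨(extinctionProb μ).toReal, ⟨ENNReal.toReal_nonneg, ?_⟩, ?_⟩
  · simpa using (ENNReal.toReal_lt_toReal h.ne_top ENNReal.one_ne_top).2 h
  · rw [ENNReal.ofReal_toReal h.ne_top, pgf_extinctionProb]

section TruncatedGeometric

variable (p : ℝ) (k : ℕ)

noncomputable def truncGeomPgf (x : ℝ) : ℝ :=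
  ∑ j ∈ Finset.range k, (1 - p) * p ^ j * x ^ j + p ^ k * x ^ k

noncomputable def truncGeomTailGF (x : ℝ) : ℝ :=
  ∑ j ∈ Finset.range k, p ^ (j + 1) * x ^ j

theorem one_sub_truncGeomPgf (x : ℝ) :
    1 - truncGeomPgf p k x = (1 - x) * truncGeomTailGF p k x := by
  induction k with
  | zero => simp [truncGeomPgf, truncGeomTailGF]
  | succ k ih =>
    simp only [truncGeomPgf, truncGeomTailGF, Finset.sum_range_succ] at ih ⊢
    linear_combination ih

theorem one_sub_mul_truncGeomTailGF_one :
    (1 - p) * truncGeomTailGF p k 1 = p - p ^ (k + 1) := by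
  induction k with
  | zero => simp [truncGeomTailGF]
  | succ k ih =>
    simp only [truncGeomTailGF, Finset.sum_range_succ] at ih ⊢
    linear_combination ih

variable {p k}

theorem one_lt_truncGeomTailGF_one_iff (hp1 : p < 1) :
    1 < truncGeomTailGF p k 1 ↔ p ^ (k + 1) - 2 * p + 1 < 0 := by
  have := one_sub_mul_truncGeomTailGF_one p k
  constructor <;> intro <;> nlinarith

theorem truncGeomTailGF_le (hp : 0 ≤ p) {x : ℝ} (hx0 : 0 ≤ x) (hx1 : x ≤ 1) :
    truncGeomTailGF p k x ≤ (1 - x) * p + x * truncGeomTailGF p k 1 := by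
  cases k with
  | zero => simp only [truncGeomTailGF, Finset.sum_range_zero]; nlinarith
  | succ k =>
    simp only [truncGeomTailGF, Finset.sum_range_succ', one_pow, mul_one, pow_zero, zero_add,
      pow_one, Finset.mul_sum, mul_add]
    have hterm : ∀ j ∈ Finset.range k, p ^ (j + 1 + 1) * x ^ (j + 1) ≤ x * p ^ (j + 1 + 1) :=
      fun j _ => by rw [mul_comm x]; gcongr; exact pow_le_of_le_one hx0 hx1 j.succ_ne_zero
    linarith [Finset.sum_le_sum hterm]

theorem exists_truncGeomPgf_eq_self (hp0 : 0 ≤ p) (hp1 : p < 1) (h : 1 < truncGeomTailGF p k 1) :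
    ∃ x ∈ Set.Ico (0 : ℝ) 1, truncGeomPgf p k x = x := by
  have hT0 : truncGeomTailGF p k 0 < 1 := by
    linarith [truncGeomTailGF_le (k := k) hp0 le_rfl zero_le_one]
  have hcont : Continuous (truncGeomTailGF p k) := by
    unfold truncGeomTailGF; fun_prop
  obtain ⟨x, ⟨hx0, hx1⟩, hTx⟩ :=
    intermediate_value_Icc zero_le_one hcont.continuousOn ⟨hT0.le, h.le⟩
  refine ⟨x, ⟨hx0, lt_of_le_of_ne hx1 ?_⟩, ?_⟩
  · rintro rfl; exact h.ne' hTx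
  · linear_combination (x - 1) * hTx - one_sub_truncGeomPgf p k x

theorem lt_truncGeomPgf (hp0 : 0 ≤ p) (hp1 : p < 1) (h : truncGeomTailGF p k 1 ≤ 1)
    {x : ℝ} (hx0 : 0 ≤ x) (hx1 : x < 1) : x < truncGeomPgf p k x := by
  have hT := truncGeomTailGF_le (k := k) hp0 hx0 hx1.le
  have hTx : truncGeomTailGF p k x < 1 := by nlinarith
  have hgap := mul_lt_of_lt_one_right (by linarith : 0 < 1 - x) hTx
  linarith [one_sub_truncGeomPgf p k x]

theorem tsum_apply_add_of_geometric (hp0 : 0 ≤ p) (hp1 : p < 1) {Y : PMF ℕ}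
    (hY : ∀ i, Y i = ENNReal.ofReal ((1 - p) * p ^ i)) :
    ∑' n, Y (n + k) = ENNReal.ofReal (p ^ k) := by
  have hY' : ∀ n, Y (n + k) = ENNReal.ofReal ((1 - p) * p ^ k) * ENNReal.ofReal p ^ n := by
    intro n
    rw [hY, ← ENNReal.ofReal_pow hp0, ← ENNReal.ofReal_mul (by positivity)]
    ring_nf
  rw [tsum_congr hY', ENNReal.tsum_mul_left, ENNReal.tsum_geometric,
    ← ENNReal.ofReal_one, ← ENNReal.ofReal_sub _ hp0, ← ENNReal.ofReal_inv_of_pos (by linarith),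
    ← ENNReal.ofReal_mul (by positivity)]
  congr 1
  field_simp [(by linarith : 1 - p ≠ 0)]

theorem pgf_map_min_of_geometric (hp0 : 0 ≤ p) (hp1 : p < 1) {Y : PMF ℕ}
    (hY : ∀ i, Y i = ENNReal.ofReal ((1 - p) * p ^ i)) {x : ℝ} (hx : 0 ≤ x) :
    (Y.map fun y => min y k).pgf (ENNReal.ofReal x) = ENNReal.ofReal (truncGeomPgf p k x) := by
  have hcoef : ∀ j, 0 ≤ (1 - p) * p ^ j := fun j => mul_nonneg (by linarith) (pow_nonneg hp0 j)
  have hhead : ∀ j ∈ Finset.range k, Y j * ENNReal.ofReal x ^ min j k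
      = ENNReal.ofReal ((1 - p) * p ^ j * x ^ j) := fun j hj => by
    rw [min_eq_left (Finset.mem_range.1 hj).le, hY, ← ENNReal.ofReal_pow hx,
      ← ENNReal.ofReal_mul (hcoef j)]
  have htail : ∀ n, Y (n + k) * ENNReal.ofReal x ^ min (n + k) k
      = Y (n + k) * ENNReal.ofReal x ^ k := fun n => by rw [min_eq_right (Nat.le_add_left k n)]
  rw [PMF.pgf_map, ← ENNReal.summable.sum_add_tsum_nat_add' (k := k), Finset.sum_congr rfl hhead,
    tsum_congr htail, ENNReal.tsum_mul_right, tsum_apply_add_of_geometric hp0 hp1 hY,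
    ← ENNReal.ofReal_pow hx, ← ENNReal.ofReal_mul (pow_nonneg hp0 k),
    ← ENNReal.ofReal_sum_of_nonneg fun j _ => mul_nonneg (hcoef j) (pow_nonneg hx j),
    ← ENNReal.ofReal_add (Finset.sum_nonneg fun j _ => mul_nonneg (hcoef j) (pow_nonneg hx j))
      (by positivity), truncGeomPgf]

end TruncatedGeometric

theorem mae_survival_const_general (k : ℕ)
    (p : ℝ) (hp0 : 0 < p) (hp1 : p < 1)
    (Y : PMF ℕ) (hY : ∀ i : ℕ, Y i = ENNReal.ofReal ((1 - p) * p ^ i)) :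
    0 < survivalProb (Y.map fun y => min y k) ↔ p ^ (k + 1) - 2 * p + 1 < 0 := by
  have hpgf {x : ℝ} (hx : 0 ≤ x) := pgf_map_min_of_geometric (k := k) hp0.le hp1 hY hx
  rw [survivalProb, tsub_pos_iff_lt, ← one_lt_truncGeomTailGF_one_iff hp1]
  constructor
  · intro hext
    by_contra hT
    obtain ⟨x, ⟨hx0, hx1⟩, hfix⟩ := exists_pgf_eq_self_of_extinctionProb_lt_one hext
    have hlt := lt_truncGeomPgf hp0.le hp1 (not_lt.1 hT) hx0 hx1
    rw [hpgf hx0, ENNReal.ofReal_eq_ofReal_iff (by linarith) hx0] at hfix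
    exact hlt.ne' hfix
  · intro hT
    obtain ⟨x, ⟨hx0, hx1⟩, hfix⟩ := exists_truncGeomPgf_eq_self hp0.le hp1 hT
    calc extinctionProb _ ≤ ENNReal.ofReal x :=
          extinctionProb_le_of_pgf_le (by rw [hpgf hx0, hfix])
      _ < 1 := ENNReal.ofReal_lt_one.2 hx1

/-- the (p,ξ)-MAE branching process with `ξ ≡ k` (offspring `X = min(Y,k)`,
`Y` geometric with `P(Y=i)=(1-p)pⁱ`) survives with positive probability iff
`p^{k+1} - 2p + 1 < 0` (equivalently, `k > log(2p-1)/log p - 1`). -/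
theorem mae_survival_const (k : ℕ) (hk : 1 ≤ k)
    (p : ℝ) (hp0 : 0 < p) (hp1 : p < 1)
    (Y : PMF ℕ) (hY : ∀ i : ℕ, Y i = ENNReal.ofReal ((1 - p) * p ^ i)) :
    0 < survivalProb (Y.map fun y => min y k) ↔ p ^ (k + 1) - 2 * p + 1 < 0 :=
  mae_survival_const_general k p hp0 hp1 Y hY
end
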